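/- Let K be a commutative unital ring in which 2, 3, …, k−1 are invertible, M a K-module, and f a flag of length k in M. Then every X ∈ u(f) satisfies X^k = 0, the map exp(X) := Σ_{i=0}^{k−1} (1/i!) X^i is a K-linear automorphism of M belonging to U(f), and exp : u(f) → U(f) is a bijection (with inverse log(1 + Y) = −Σ_{i=1}^{k−1} (−Y)^i / i). -/
import Mathlib


/-- A flag of length `k` in the `K`-module `M`: an ascending chain of submodules
`0 = f 0 ⊆ f 1 ⊆ … ⊆ f k = M`. -/
def IsFlag {K M : Type*} [CommRing K] [AddCommGroup M] [Module K M]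
    (k : ℕ) (f : ℕ → Submodule K M) : Prop :=
  f 0 = ⊥ ∧ f k = ⊤ ∧ ∀ i j : ℕ, i ≤ j → j ≤ k → f i ≤ f j

/-- Membership in the "Lie algebra" `u(f)`: `X (f i) ⊆ f (i - 1)` for `i = 1, …, k`. -/
def MemLieU {K M : Type*} [CommRing K] [AddCommGroup M] [Module K M]
    (k : ℕ) (f : ℕ → Submodule K M) (X : Module.End K M) : Prop :=
  ∀ i : ℕ, 1 ≤ i → i ≤ k → Submodule.map X (f i) ≤ f (i - 1)

/-- Membership in the group `U(f)`: `(u - id) (f i) ⊆ f (i - 1)` for `i = 1, …, k`. -/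
def MemU {K M : Type*} [CommRing K] [AddCommGroup M] [Module K M]
    (k : ℕ) (f : ℕ → Submodule K M) (u : M ≃ₗ[K] M) : Prop :=
  ∀ i : ℕ, 1 ≤ i → i ≤ k →
    Submodule.map ((u : M →ₗ[K] M) - LinearMap.id) (f i) ≤ f (i - 1)

/-- `exp X = ∑_{i=0}^{k-1} (1/i!) X^i`. -/
noncomputable def expE {K M : Type*} [CommRing K] [AddCommGroup M] [Module K M]
    (k : ℕ) (X : Module.End K M) : Module.End K M :=
  ∑ i ∈ Finset.range k, Ring.inverse ((Nat.factorial i : K)) • X ^ i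

/-- `log (1 + Y) = -∑_{i=1}^{k-1} (-Y)^i / i`. -/
noncomputable def logE {K M : Type*} [CommRing K] [AddCommGroup M] [Module K M]
    (k : ℕ) (Y : Module.End K M) : Module.End K M :=
  -∑ i ∈ Finset.Icc 1 (k - 1), Ring.inverse ((i : K)) • (-Y) ^ i

namespace EBU

/-! ### Filtration-shift machinery -/

section Shift

variable {K M : Type*} [CommRing K] [AddCommGroup M] [Module K M]
variable {k : ℕ} {f : ℕ → Submodule K M}

/-- `Z` shifts the flag down by `m`. -/
def ShiftBy (k : ℕ) (f : ℕ → Submodule K M) (m : ℕ) (Z : Module.End K M) : Prop :=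
  ∀ i, i ≤ k → Submodule.map Z (f i) ≤ f (i - m)

namespace ShiftBy

lemma of_memLieU (hf : IsFlag k f) {X : Module.End K M} (hX : MemLieU k f X) :
    ShiftBy k f 1 X := by
  intro i hi
  rcases Nat.eq_zero_or_pos i with rfl | h1
  · rw [hf.1]; simp
  · exact hX i h1 hi

lemma memLieU {X : Module.End K M} (hX : ShiftBy k f 1 X) : MemLieU k f X :=
  fun i _ hi => hX i hi

lemma mono (hf : IsFlag k f) {m m' : ℕ} (h : m' ≤ m) {Z : Module.End K M}
    (hZ : ShiftBy k f m Z) : ShiftBy k f m' Z := fun i hi =>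
  (hZ i hi).trans (hf.2.2 _ _ (Nat.sub_le_sub_left h i) ((Nat.sub_le i m').trans hi))

lemma mul {a b : ℕ} {Z W : Module.End K M}
    (hZ : ShiftBy k f a Z) (hW : ShiftBy k f b W) : ShiftBy k f (a + b) (Z * W) := by
  intro i hi
  rw [Module.End.mul_eq_comp, Submodule.map_comp]
  refine le_trans (Submodule.map_mono (hW i hi)) ?_
  refine le_trans (hZ (i - b) ((Nat.sub_le i b).trans hi)) ?_
  have : i - b - a = i - (a + b) := by omega
  rw [this]

lemma zero (m : ℕ) : ShiftBy k f m (0 : Module.End K M) := by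
  intro i hi
  simp

lemma add {m : ℕ} {Z W : Module.End K M} (hZ : ShiftBy k f m Z) (hW : ShiftBy k f m W) :
    ShiftBy k f m (Z + W) := by
  intro i hi
  refine le_trans (Submodule.map_add_le _ _ _) (sup_le (hZ i hi) (hW i hi))

lemma smul {m : ℕ} {Z : Module.End K M} (c : K) (hZ : ShiftBy k f m Z) :
    ShiftBy k f m (c • Z) := by
  intro i hi
  rintro _ ⟨x, hx, rfl⟩
  exact Submodule.smul_mem _ c (hZ i hi ⟨x, hx, rfl⟩)

lemma neg {m : ℕ} {Z : Module.End K M} (hZ : ShiftBy k f m Z) : ShiftBy k f m (-Z) := by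
  intro i hi
  rw [Submodule.map_neg]
  exact hZ i hi

lemma sub {m : ℕ} {Z W : Module.End K M} (hZ : ShiftBy k f m Z) (hW : ShiftBy k f m W) :
    ShiftBy k f m (Z - W) := by
  rw [sub_eq_add_neg]; exact hZ.add hW.neg

lemma sum {m : ℕ} {ι : Type*} {s : Finset ι} {g : ι → Module.End K M}
    (h : ∀ i ∈ s, ShiftBy k f m (g i)) : ShiftBy k f m (∑ i ∈ s, g i) :=
  Finset.sum_induction g (ShiftBy k f m) (fun _ _ ha hb => ha.add hb) (zero m) h

lemma one : ShiftBy k f 0 (1 : Module.End K M) := by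
  intro i hi
  rw [Module.End.one_eq_id, Submodule.map_id, Nat.sub_zero]

lemma pow (hf : IsFlag k f) {X : Module.End K M} (hX : ShiftBy k f 1 X) (n : ℕ) :
    ShiftBy k f n (X ^ n) := by
  induction n with
  | zero => simpa using one
  | succ n ih => rw [pow_succ]; exact ih.mul hX

lemma eq_zero (hf : IsFlag k f) {Z : Module.End K M} (hZ : ShiftBy k f k Z) : Z = 0 := by
  ext x
  have hx : Z x ∈ Submodule.map Z (f k) := ⟨x, by rw [hf.2.1]; trivial, rfl⟩
  have h2 := hZ k le_rfl hx
  rw [Nat.sub_self, hf.1] at h2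
  simpa using h2

end ShiftBy

lemma pow_k_eq_zero (hf : IsFlag k f) {X : Module.End K M} (hX : MemLieU k f X) :
    X ^ k = 0 :=
  ShiftBy.eq_zero hf (ShiftBy.pow hf (ShiftBy.of_memLieU hf hX) k)

lemma subsingleton_of_k_zero (hf : IsFlag 0 f) : Subsingleton M := by
  have h : (⊤ : Submodule K M) = ⊥ := by rw [← hf.2.1, hf.1]
  refine ⟨fun a b => ?_⟩
  have ha : a ∈ (⊥ : Submodule K M) := h ▸ Submodule.mem_top
  have hb : b ∈ (⊥ : Submodule K M) := h ▸ Submodule.mem_top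
  rw [Submodule.mem_bot] at ha hb
  rw [ha, hb]

end Shift

/-! ### Truncated exponential and logarithm polynomials -/

open Polynomial Finset

noncomputable def Pp (A : Type*) [CommRing A] (k : ℕ) : Polynomial A :=
  ∑ i ∈ Finset.range k, Polynomial.C (Ring.inverse ((Nat.factorial i : A))) * Polynomial.X ^ i

noncomputable def Qq (A : Type*) [CommRing A] (k : ℕ) : Polynomial A :=
  -∑ i ∈ Finset.Icc 1 (k - 1), Polynomial.C (Ring.inverse ((i : A))) * (-Polynomial.X) ^ i

variable {A : Type*} [CommRing A]

lemma Qq_eq (k : ℕ) : Qq A k =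
    -∑ i ∈ Finset.Icc 1 (k - 1),
      Polynomial.C ((-1) ^ i * Ring.inverse ((i : A))) * Polynomial.X ^ i := by
  unfold Qq
  congr 1
  refine Finset.sum_congr rfl fun i _ => ?_
  rw [neg_pow, map_mul, ← C_1, ← C_neg, ← C_pow]
  ring

lemma coeff_Pp (k n : ℕ) : (Pp A k).coeff n =
    if n < k then Ring.inverse ((Nat.factorial n : A)) else 0 := by
  rw [Pp, Polynomial.finset_sum_coeff]
  simp only [Polynomial.coeff_C_mul, Polynomial.coeff_X_pow, mul_ite, mul_one, mul_zero]
  rw [Finset.sum_ite_eq (Finset.range k) n]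
  simp [Finset.mem_range]

lemma coeff_Qq (k n : ℕ) : (Qq A k).coeff n =
    if 1 ≤ n ∧ n ≤ k - 1 then (-1) ^ (n + 1) * Ring.inverse ((n : A)) else 0 := by
  rw [Qq_eq, Polynomial.coeff_neg, Polynomial.finset_sum_coeff]
  simp only [Polynomial.coeff_C_mul, Polynomial.coeff_X_pow, mul_ite, mul_one, mul_zero]
  rw [Finset.sum_ite_eq (Finset.Icc 1 (k - 1)) n]
  simp only [Finset.mem_Icc]
  split_ifs with h
  · rw [pow_succ]; ring
  · simp

lemma X_dvd_Qq (k : ℕ) : Polynomial.X ∣ Qq A k := by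
  rw [Polynomial.X_dvd_iff, coeff_Qq]
  simp

lemma deriv_Pp (k : ℕ) : derivative (Pp ℚ (k + 1)) = Pp ℚ k := by
  ext n
  rw [Polynomial.coeff_derivative, coeff_Pp, coeff_Pp]
  split_ifs with h1 h2 h2
  · rw [Ring.inverse_eq_inv', Nat.factorial_succ]
    push_cast
    have h0 : ((n : ℚ) + 1) ≠ 0 := by positivity
    have hfne : ((Nat.factorial n : ℚ)) ≠ 0 := by
      exact_mod_cast Nat.cast_ne_zero.mpr (Nat.factorial_ne_zero n)
    field_simp
  · omega
  · omega
  · simp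

lemma deriv_Qq (k : ℕ) :
    derivative (Qq ℚ (k + 1)) = ∑ i ∈ Finset.range k, (-Polynomial.X) ^ i := by
  ext n
  rw [Polynomial.coeff_derivative, coeff_Qq]
  have hr : (∑ i ∈ Finset.range k, (-Polynomial.X : ℚ[X]) ^ i).coeff n
      = if n < k then (-1 : ℚ) ^ n else 0 := by
    rw [Polynomial.finset_sum_coeff]
    have h : ∀ i, ((-Polynomial.X : ℚ[X]) ^ i).coeff n = if n = i then (-1 : ℚ) ^ i else 0 := by
      intro i
      rw [neg_pow, ← C_1, ← C_neg, ← C_pow, Polynomial.coeff_C_mul, Polynomial.coeff_X_pow]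
      simp [mul_ite]
    simp only [h]
    rw [Finset.sum_ite_eq (Finset.range k) n]
    simp [Finset.mem_range]
  rw [hr]
  have hsucc : (k + 1 : ℕ) - 1 = k := rfl
  rw [hsucc]
  split_ifs with h1 h2 h2
  · have h0 : ((n : ℚ) + 1) ≠ 0 := by positivity
    rw [Ring.inverse_eq_inv']
    push_cast
    field_simp
    ring
  · omega
  · omega
  · simp

lemma comp_left_dvd {n : ℕ} {p p' q : A[X]} (hq : Polynomial.X ∣ q)
    (h : Polynomial.X ^ n ∣ p - p') :
    Polynomial.X ^ n ∣ p.comp q - p'.comp q := by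
  obtain ⟨c, hc⟩ := h
  have e : p.comp q - p'.comp q = (p - p').comp q := by rw [Polynomial.sub_comp]
  rw [e, hc, Polynomial.mul_comp, Polynomial.X_pow_comp]
  exact Dvd.dvd.mul_right (pow_dvd_pow_of_dvd hq n) _

lemma comp_right_dvd {n : ℕ} {p q q' : A[X]} (h : Polynomial.X ^ n ∣ q - q') :
    Polynomial.X ^ n ∣ p.comp q - p.comp q' := by
  refine dvd_trans h ?_
  have e : ∀ r : A[X], p.comp r = (p.map Polynomial.C).eval r := by
    intro r
    rw [Polynomial.comp, Polynomial.eval₂_eq_eval_map]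
  rw [e q, e q']
  exact Polynomial.sub_dvd_eval_sub q q' _

/-- The key truncated identity `exp (log (1 + X)) ≡ 1 + X  (mod X^k)` over `ℚ`. -/
lemma key_rat (k : ℕ) :
    (Polynomial.X : ℚ[X]) ^ k ∣ (Pp ℚ k).comp (Qq ℚ k) - (1 + Polynomial.X) := by
  induction k with
  | zero => simpa using one_dvd _
  | succ k ih =>
    rcases Nat.eq_zero_or_pos k with rfl | hk1
    · have hP : Pp ℚ 1 = 1 := by simp [Pp]
      have hQ : Qq ℚ 1 = 0 := by simp [Qq]
      rw [hP, hQ, Polynomial.one_comp, pow_one]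
      have e : (1 : ℚ[X]) - (1 + Polynomial.X) = -Polynomial.X := by ring
      rw [e]
      exact (dvd_neg).mpr dvd_rfl
    · have hPd : Polynomial.X ^ k ∣ Pp ℚ (k + 1) - Pp ℚ k := by
        have e : Pp ℚ (k + 1) - Pp ℚ k
            = Polynomial.C (Ring.inverse ((Nat.factorial k : ℚ))) * Polynomial.X ^ k := by
          rw [Pp, Pp, Finset.sum_range_succ]; ring
        rw [e]; exact dvd_mul_left _ _
      have hQd : Polynomial.X ^ k ∣ Qq ℚ (k + 1) - Qq ℚ k := by
        obtain ⟨j, rfl⟩ : ∃ j, k = j + 1 := ⟨k - 1, by omega⟩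
        have e : Qq ℚ (j + 1 + 1) - Qq ℚ (j + 1)
            = -(Polynomial.C (Ring.inverse (((j + 1 : ℕ) : ℚ)))
                * (-Polynomial.X) ^ (j + 1)) := by
          rw [Qq, Qq]
          simp only [Nat.add_sub_cancel]
          rw [Finset.sum_Icc_succ_top (by omega : 1 ≤ j + 1)]
          push_cast
          ring
        rw [e, neg_pow]
        exact dvd_neg.mpr (Dvd.dvd.mul_left (dvd_mul_left _ _) _)
      have hQX : Polynomial.X ∣ Qq ℚ (k + 1) := X_dvd_Qq _
      have d1 : Polynomial.X ^ k ∣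
          (Pp ℚ (k + 1)).comp (Qq ℚ (k + 1)) - (Pp ℚ k).comp (Qq ℚ (k + 1)) :=
        comp_left_dvd hQX hPd
      have d2 : Polynomial.X ^ k ∣
          (Pp ℚ k).comp (Qq ℚ (k + 1)) - (Pp ℚ k).comp (Qq ℚ k) :=
        comp_right_dvd hQd
      have hPQ1 : Polynomial.X ^ k ∣ (Pp ℚ k).comp (Qq ℚ (k + 1)) - (1 + Polynomial.X) := by
        have h := dvd_add d2 ih
        have e : (Pp ℚ k).comp (Qq ℚ (k + 1)) - (Pp ℚ k).comp (Qq ℚ k)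
            + ((Pp ℚ k).comp (Qq ℚ k) - (1 + Polynomial.X))
            = (Pp ℚ k).comp (Qq ℚ (k + 1)) - (1 + Polynomial.X) := by ring
        rwa [e] at h
      have hG : Polynomial.X ^ k ∣
          (Pp ℚ (k + 1)).comp (Qq ℚ (k + 1)) - (1 + Polynomial.X) := by
        have h := dvd_add d1 hPQ1
        have e : (Pp ℚ (k + 1)).comp (Qq ℚ (k + 1)) - (Pp ℚ k).comp (Qq ℚ (k + 1))
            + ((Pp ℚ k).comp (Qq ℚ (k + 1)) - (1 + Polynomial.X))
            = (Pp ℚ (k + 1)).comp (Qq ℚ (k + 1)) - (1 + Polynomial.X) := by ring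
        rwa [e] at h
      have hdG : Polynomial.X ^ k ∣
          derivative ((Pp ℚ (k + 1)).comp (Qq ℚ (k + 1)) - (1 + Polynomial.X)) := by
        rw [derivative_sub, Polynomial.derivative_comp, deriv_Pp, deriv_Qq]
        have hder1 : derivative (1 + Polynomial.X : ℚ[X]) = 1 := by
          rw [derivative_add, derivative_one, derivative_X, zero_add]
        rw [hder1]
        set S : ℚ[X] := ∑ i ∈ Finset.range k, (-Polynomial.X) ^ i with hS
        have hgeom : S * (1 + Polynomial.X) - 1 = -(-Polynomial.X) ^ k := by
          have h := geom_sum_mul (-Polynomial.X : ℚ[X]) k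
          rw [← hS] at h
          linear_combination -h
        have e : S * (Pp ℚ k).comp (Qq ℚ (k + 1)) - 1
            = S * ((Pp ℚ k).comp (Qq ℚ (k + 1)) - (1 + Polynomial.X))
              + (S * (1 + Polynomial.X) - 1) := by ring
        rw [e, hgeom]
        refine dvd_add (Dvd.dvd.mul_left hPQ1 S) ?_
        rw [neg_pow]
        exact dvd_neg.mpr (dvd_mul_left _ _)
      rw [Polynomial.X_pow_dvd_iff]
      intro d hd
      rcases Nat.lt_or_ge d k with h | h
      · exact Polynomial.X_pow_dvd_iff.mp hG d h
      · have hdk : d = k := by omega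
        subst hdk
        have h1 : (derivative ((Pp ℚ (d + 1)).comp (Qq ℚ (d + 1))
            - (1 + Polynomial.X))).coeff (d - 1) = 0 :=
          Polynomial.X_pow_dvd_iff.mp hdG (d - 1) (by omega)
        rw [Polynomial.coeff_derivative] at h1
        have hd1 : d - 1 + 1 = d := by omega
        rw [hd1] at h1
        have hne : ((d - 1 : ℕ) : ℚ) + 1 ≠ 0 := by positivity
        exact (mul_eq_zero.mp h1).resolve_right hne

/-! ### Transfer of the key identity to `K` -/

lemma map_ringInverse {A B : Type*} [CommRing A] [CommRing B] (g : A →+* B) {a : A}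
    (ha : IsUnit a) : g (Ring.inverse a) = Ring.inverse (g a) := by
  obtain ⟨u, rfl⟩ := ha
  rw [Ring.inverse_unit]
  have h2 : (g : A → B) ↑u = ↑(Units.map (g : A →* B) u) := rfl
  rw [h2, Ring.inverse_unit]
  simp

lemma map_Pp {A B : Type*} [CommRing A] [CommRing B] (g : A →+* B) (k : ℕ)
    (h : ∀ i, i < k → IsUnit ((Nat.factorial i : A))) :
    (Pp A k).map g = Pp B k := by
  rw [Pp, Pp, Polynomial.map_sum]
  refine Finset.sum_congr rfl fun i hi => ?_
  rw [Polynomial.map_mul, Polynomial.map_pow, Polynomial.map_C, Polynomial.map_X,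
    map_ringInverse g (h i (Finset.mem_range.mp hi)), map_natCast]

lemma map_Qq {A B : Type*} [CommRing A] [CommRing B] (g : A →+* B) (k : ℕ)
    (h : ∀ i, 1 ≤ i → i ≤ k - 1 → IsUnit ((i : A))) :
    (Qq A k).map g = Qq B k := by
  rw [Qq, Qq, Polynomial.map_neg, Polynomial.map_sum]
  congr 1
  refine Finset.sum_congr rfl fun i hi => ?_
  obtain ⟨h1, h2⟩ := Finset.mem_Icc.mp hi
  rw [Polynomial.map_mul, Polynomial.map_pow, Polynomial.map_C, Polynomial.map_neg,
    Polynomial.map_X, map_ringInverse g (h i h1 h2), map_natCast]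

/-- The key truncated identity over any commutative ring in which `2, …, k-1` are
invertible. -/
lemma key_K {K : Type*} [CommRing K] (k : ℕ)
    (hk : ∀ i : ℕ, 2 ≤ i → i ≤ k - 1 → IsUnit (i : K)) :
    (Polynomial.X : K[X]) ^ k ∣ (Pp K k).comp (Qq K k) - (1 + Polynomial.X) := by
  have hfactK : ∀ i, i ≤ k - 1 → IsUnit ((Nat.factorial i : K)) := by
    intro i
    induction i with
    | zero => intro _; simp
    | succ i ih =>
      intro hik
      have h1 : IsUnit ((i + 1 : ℕ) : K) := by
        rcases Nat.lt_or_ge (i + 1) 2 with h | h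
        · have hi0 : i = 0 := by omega
          subst hi0
          simp
        · exact hk _ h hik
      have h2 := ih (by omega)
      rw [Nat.factorial_succ]
      push_cast
      push_cast at h1
      exact h1.mul h2
  have hmK : IsUnit (((Nat.factorial (k - 1) : ℤ) : K)) := by
    have h := hfactK (k - 1) le_rfl
    have e : (((Nat.factorial (k - 1) : ℤ)) : K) = ((Nat.factorial (k - 1) : K)) := by
      push_cast; ring
    rwa [e]
  have hmQ : IsUnit ((Int.castRingHom ℚ) ((Nat.factorial (k - 1) : ℤ))) := by
    simp only [eq_intCast, Int.cast_natCast]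
    exact isUnit_iff_ne_zero.mpr (Nat.cast_ne_zero.mpr (Nat.factorial_ne_zero _))
  have hmKu : IsUnit ((Int.castRingHom K) ((Nat.factorial (k - 1) : ℤ))) := by
    simpa using hmK
  let Loc : Type := Localization.Away ((Nat.factorial (k - 1) : ℤ))
  let φ : Loc →+* K := IsLocalization.Away.lift (P := K) ((Nat.factorial (k - 1) : ℤ)) hmKu
  let ψ : Loc →+* ℚ := IsLocalization.Away.lift (P := ℚ) ((Nat.factorial (k - 1) : ℤ)) hmQ
  have hAlgUnit : IsUnit (((Nat.factorial (k - 1) : ℕ) : Loc)) := by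
    have h := IsLocalization.Away.algebraMap_isUnit (S := Loc) ((Nat.factorial (k - 1) : ℤ))
    rwa [map_natCast (algebraMap ℤ Loc) (Nat.factorial (k - 1))] at h
  have hfactLoc : ∀ i, i < k → IsUnit ((Nat.factorial i : Loc)) := by
    intro i hik
    exact isUnit_of_dvd_unit
      (Nat.cast_dvd_cast (Nat.factorial_dvd_factorial (by omega : i ≤ k - 1))) hAlgUnit
  have hnatLoc : ∀ i, 1 ≤ i → i ≤ k - 1 → IsUnit ((i : Loc)) := by
    intro i h1 h2
    exact isUnit_of_dvd_unit (Nat.cast_dvd_cast (Nat.dvd_factorial h1 h2)) hAlgUnit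
  have hψinj : Function.Injective ψ := by
    rw [injective_iff_map_eq_zero]
    intro z hz
    obtain ⟨n, a, hsur⟩ :=
      IsLocalization.Away.surj (S := Loc) ((Nat.factorial (k - 1) : ℤ)) z
    have h2 := congrArg ψ hsur
    rw [map_mul, hz, zero_mul, IsLocalization.Away.lift_eq] at h2
    have ha : a = 0 := by
      have h3 := h2.symm
      simpa using h3
    rw [ha, map_zero] at hsur
    have hu : IsUnit ((algebraMap ℤ Loc) ((Nat.factorial (k - 1) : ℤ)) ^ n) :=
      (IsLocalization.Away.algebraMap_isUnit (S := Loc) _).pow n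
    exact (hu.mul_left_eq_zero).mp hsur
  have hcoeff : ∀ d, d < k →
      ((Pp Loc k).comp (Qq Loc k) - (1 + Polynomial.X)).coeff d = 0 := by
    intro d hd
    apply hψinj
    rw [map_zero, ← Polynomial.coeff_map, Polynomial.map_sub, Polynomial.map_comp,
      map_Pp ψ k hfactLoc, map_Qq ψ k hnatLoc, Polynomial.map_add, Polynomial.map_one,
      Polynomial.map_X]
    exact Polynomial.X_pow_dvd_iff.mp (key_rat k) d hd
  have hdvdLoc : (Polynomial.X : Loc[X]) ^ k ∣
      (Pp Loc k).comp (Qq Loc k) - (1 + Polynomial.X) :=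
    Polynomial.X_pow_dvd_iff.mpr hcoeff
  obtain ⟨H, hH⟩ := hdvdLoc
  have h3 := congrArg (Polynomial.map φ) hH
  rw [Polynomial.map_sub, Polynomial.map_comp, map_Pp φ k hfactLoc, map_Qq φ k hnatLoc,
    Polynomial.map_add, Polynomial.map_one, Polynomial.map_X, Polynomial.map_mul,
    Polynomial.map_pow, Polynomial.map_X] at h3
  exact ⟨H.map φ, h3⟩

/-! ### Evaluating the polynomials on endomorphisms -/

section Eval

variable {K M : Type*} [CommRing K] [AddCommGroup M] [Module K M]

lemma aeval_Pp (k : ℕ) (Z : Module.End K M) : Polynomial.aeval Z (Pp K k) = expE k Z := by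
  rw [Pp, expE, map_sum]
  refine Finset.sum_congr rfl fun i _ => ?_
  rw [map_mul, Polynomial.aeval_C, map_pow, Polynomial.aeval_X, Algebra.smul_def]

lemma aeval_Qq (k : ℕ) (Z : Module.End K M) : Polynomial.aeval Z (Qq K k) = logE k Z := by
  rw [Qq, logE, map_neg, map_sum]
  congr 1
  refine Finset.sum_congr rfl fun i _ => ?_
  rw [map_mul, Polynomial.aeval_C, map_pow, map_neg, Polynomial.aeval_X, Algebra.smul_def]

end Eval

end EBU

/-- If `2, …, k-1` are invertible in `K` and `f` is a flag of length `k`, then every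
`X ∈ u(f)` satisfies `X ^ k = 0`, `exp X` is an automorphism of `M` belonging to `U(f)`,
and `exp : u(f) → U(f)` is a bijection with inverse `log (1 + Y)`. -/
theorem exp_bijection_unipotent
    {K M : Type*} [CommRing K] [AddCommGroup M] [Module K M]
    (k : ℕ) (hk : ∀ i : ℕ, 2 ≤ i → i ≤ k - 1 → IsUnit (i : K))
    (f : ℕ → Submodule K M) (hf : IsFlag k f) :
    (∀ X : Module.End K M, MemLieU k f X → X ^ k = 0) ∧
    (∀ X : Module.End K M, MemLieU k f X →
      ∃ u : M ≃ₗ[K] M, (u : M →ₗ[K] M) = expE k X ∧ MemU k f u) ∧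
    (∀ X X' : Module.End K M, MemLieU k f X → MemLieU k f X' →
      expE k X = expE k X' → X = X') ∧
    (∀ u : M ≃ₗ[K] M, MemU k f u →
      MemLieU k f (logE k ((u : M →ₗ[K] M) - 1)) ∧
        expE k (logE k ((u : M →ₗ[K] M) - 1)) = (u : M →ₗ[K] M)) := by
  classical
  have part1 : ∀ X : Module.End K M, MemLieU k f X → X ^ k = 0 := fun X hX =>
    EBU.pow_k_eq_zero hf hX
  rcases Nat.eq_zero_or_pos k with rfl | hkpos
  · -- `k = 0`: the module is trivial.
    have hsub : Subsingleton M := EBU.subsingleton_of_k_zero hf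
    have hend : ∀ a b : Module.End K M, a = b := fun a b => by
      ext x
      exact Subsingleton.elim _ _
    refine ⟨part1, ?_, ?_, ?_⟩
    · intro X _
      exact ⟨LinearEquiv.refl K M, hend _ _,
        fun i h1 h0 => absurd (h1.trans h0) (by norm_num)⟩
    · intro X X' _ _ _
      exact hend _ _
    · intro u _
      exact ⟨fun i h1 h0 => absurd (h1.trans h0) (by norm_num), hend _ _⟩
  · -- `k ≥ 1`
    have part2 : ∀ X : Module.End K M, MemLieU k f X →
        ∃ u : M ≃ₗ[K] M, (u : M →ₗ[K] M) = expE k X ∧ MemU k f u := by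
      intro X hX
      have hX1 : EBU.ShiftBy k f 1 X := EBU.ShiftBy.of_memLieU hf hX
      have he : expE k X - 1
          = ∑ i ∈ Finset.Ico 1 k, Ring.inverse ((Nat.factorial i : K)) • X ^ i := by
        rw [expE, Finset.range_eq_Ico, Finset.sum_eq_sum_Ico_succ_bot hkpos]
        simp only [Nat.factorial_zero, Nat.cast_one, Ring.inverse_one, pow_zero, one_smul]
        rw [zero_add]
        abel
      have hNshift : EBU.ShiftBy k f 1 (expE k X - 1) := by
        rw [he]
        refine EBU.ShiftBy.sum fun i hi => ?_
        obtain ⟨h1, _⟩ := Finset.mem_Ico.mp hi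
        exact EBU.ShiftBy.smul _ (EBU.ShiftBy.mono hf h1 (EBU.ShiftBy.pow hf hX1 i))
      have hNnil : (expE k X - 1) ^ k = 0 :=
        EBU.pow_k_eq_zero hf (EBU.ShiftBy.memLieU hNshift)
      have hUnit : IsUnit (expE k X) := by
        have h := IsNilpotent.isUnit_one_add (⟨k, hNnil⟩ : IsNilpotent (expE k X - 1))
        have e : 1 + (expE k X - 1) = expE k X := by abel
        rwa [e] at h
      have hbij : Function.Bijective (expE k X) := (Module.End.isUnit_iff _).mp hUnit
      refine ⟨LinearEquiv.ofBijective _ hbij, ?_, ?_⟩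
      · ext x
        rfl
      · intro i h1 hik
        have e : (((LinearEquiv.ofBijective _ hbij : M ≃ₗ[K] M) : M →ₗ[K] M)
            - LinearMap.id) = expE k X - 1 := by
          ext x
          rfl
        rw [e]
        exact hNshift i hik
    have part3 : ∀ X X' : Module.End K M, MemLieU k f X → MemLieU k f X' →
        expE k X = expE k X' → X = X' := by
      intro X X' hX hX' heq
      rcases Nat.lt_or_ge k 2 with hk2 | hk2
      · -- `k = 1`: everything in `u(f)` is zero.
        have hk1 : k = 1 := by omega
        subst hk1
        have e1 : X = 0 := by have h := part1 X hX; rwa [pow_one] at h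
        have e2 : X' = 0 := by have h := part1 X' hX'; rwa [pow_one] at h
        rw [e1, e2]
      · have hX1 : EBU.ShiftBy k f 1 X := EBU.ShiftBy.of_memLieU hf hX
        have hX1' : EBU.ShiftBy k f 1 X' := EBU.ShiftBy.of_memLieU hf hX'
        have step : ∀ m, EBU.ShiftBy k f m (X - X') →
            ∀ i, EBU.ShiftBy k f (m + i) (X ^ (i + 1) - X' ^ (i + 1)) := by
          intro m hm i
          induction i with
          | zero => simpa using hm
          | succ i ih =>
            have e : X ^ (i + 2) - X' ^ (i + 2)
                = X * (X ^ (i + 1) - X' ^ (i + 1)) + (X - X') * X' ^ (i + 1) := by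
              rw [mul_sub, sub_mul, ← pow_succ', ← pow_succ']
              abel
            rw [e]
            have t1 : EBU.ShiftBy k f (1 + (m + i)) (X * (X ^ (i + 1) - X' ^ (i + 1))) :=
              hX1.mul ih
            have t2 : EBU.ShiftBy k f (m + (i + 1)) ((X - X') * X' ^ (i + 1)) :=
              hm.mul (EBU.ShiftBy.pow hf hX1' (i + 1))
            exact (EBU.ShiftBy.mono hf (by omega) t1).add
              (EBU.ShiftBy.mono hf le_rfl t2)
        have main : ∀ m, EBU.ShiftBy k f m (X - X') := by
          intro m
          induction m with
          | zero => exact EBU.ShiftBy.mono hf (Nat.zero_le 1) (hX1.sub hX1')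
          | succ m ihm =>
            rcases Nat.eq_zero_or_pos m with rfl | hm1
            · exact hX1.sub hX1'
            · have h0 : ∑ i ∈ Finset.range k,
                  Ring.inverse ((Nat.factorial i : K)) • (X ^ i - X' ^ i) = 0 := by
                have h1 : ∑ i ∈ Finset.range k,
                    (Ring.inverse ((Nat.factorial i : K)) • X ^ i
                      - Ring.inverse ((Nat.factorial i : K)) • X' ^ i) = 0 := by
                  rw [Finset.sum_sub_distrib, ← expE, ← expE, heq, sub_self]
                simpa [smul_sub] using h1
              have hXX' : X - X' = ∑ i ∈ Finset.Ico 2 k,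
                  Ring.inverse ((Nat.factorial i : K)) • (X' ^ i - X ^ i) := by
                rw [Finset.range_eq_Ico, Finset.sum_eq_sum_Ico_succ_bot (by omega : 0 < k),
                  Finset.sum_eq_sum_Ico_succ_bot (by omega : 1 < k)] at h0
                have t0 : Ring.inverse ((Nat.factorial 0 : K)) • (X ^ 0 - X' ^ 0) = 0 := by
                  simp
                have t1 : Ring.inverse ((Nat.factorial 1 : K)) • (X ^ 1 - X' ^ 1)
                    = X - X' := by
                  simp [Nat.factorial_one]
                rw [t0, t1, zero_add] at h0
                have h2 : X - X' = -∑ i ∈ Finset.Ico 2 k,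
                    Ring.inverse ((Nat.factorial i : K)) • (X ^ i - X' ^ i) :=
                  eq_neg_of_add_eq_zero_left h0
                rw [h2, ← Finset.sum_neg_distrib]
                refine Finset.sum_congr rfl fun i _ => ?_
                rw [← smul_neg, neg_sub]
              rw [hXX']
              refine EBU.ShiftBy.sum fun i hi => ?_
              obtain ⟨h2i, hik⟩ := Finset.mem_Ico.mp hi
              refine EBU.ShiftBy.smul _ ?_
              obtain ⟨j, rfl⟩ : ∃ j, i = j + 1 := ⟨i - 1, by omega⟩
              have hstep := step m ihm j
              have hneg := hstep.neg
              rw [neg_sub] at hneg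
              exact EBU.ShiftBy.mono hf (by omega : m + 1 ≤ m + j) hneg
        have hzero : X - X' = 0 := EBU.ShiftBy.eq_zero hf (main k)
        exact sub_eq_zero.mp hzero
    have part4 : ∀ u : M ≃ₗ[K] M, MemU k f u →
        MemLieU k f (logE k ((u : M →ₗ[K] M) - 1)) ∧
          expE k (logE k ((u : M →ₗ[K] M) - 1)) = (u : M →ₗ[K] M) := by
      intro u hu
      set Y : Module.End K M := (u : M →ₗ[K] M) - 1 with hY
      have hYshift : EBU.ShiftBy k f 1 Y := by
        intro i hi
        rcases Nat.eq_zero_or_pos i with rfl | h1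
        · rw [hf.1]; simp
        · have h := hu i h1 hi
          rwa [show ((u : M →ₗ[K] M) - LinearMap.id) = Y from rfl] at h
      have hlogshift : EBU.ShiftBy k f 1 (logE k Y) := by
        rw [logE]
        refine (EBU.ShiftBy.sum fun i hi => ?_).neg
        obtain ⟨h1, _⟩ := Finset.mem_Icc.mp hi
        exact EBU.ShiftBy.smul _
          (EBU.ShiftBy.mono hf h1 (EBU.ShiftBy.pow hf hYshift.neg i))
      refine ⟨EBU.ShiftBy.memLieU hlogshift, ?_⟩
      have hYk : Y ^ k = 0 := EBU.pow_k_eq_zero hf (EBU.ShiftBy.memLieU hYshift)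
      obtain ⟨H, hH⟩ := EBU.key_K (K := K) k hk
      have h3 := congrArg (Polynomial.aeval Y) hH
      rw [map_sub, Polynomial.aeval_comp, EBU.aeval_Qq, EBU.aeval_Pp, map_add, map_one,
        Polynomial.aeval_X, map_mul, map_pow, Polynomial.aeval_X, hYk, zero_mul] at h3
      have h4 : expE k (logE k Y) = 1 + Y := by rwa [sub_eq_zero] at h3
      rw [h4, hY]
      abel
    exact ⟨part1, part2, part3, part4⟩
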